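/- Let F ⊆ I_uf and let Θ ⊆ ℤ^I satisfy Θ + f_i ⊆ Θ for all i ∈ I. Let S = {s_g : g∈Θ} be a Θ-pointed family satisfying the factorization property in the direction F: for every j ∈ F and every g ∈ Θ, x_j · frz_{F,g}(s_g) = frz_{F,g+f_j}(s_{g+f_j}). Then for every g ∈ Θ and every tuple (d_j)_{j∈F} of natural numbers such that supp s_{g+Σ_{j∈F} d_j f_j} ∩ F = ∅, one has x^{−Σ_{j∈F} d_j f_j} · s_{g+Σ_{j∈F} d_j f_j} = frz_{F,g}(s_g); in particular the left-hand side is independent of the choice of (d_j)_{j∈F}. -/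

import Mathlib

/-! The shifts `m = Σ_{j∈F} d_j f_j` form the additive submonoid generated by the `f_j`, `j ∈ F`,
and the factorization property is stable under adding shifts, so
`x^m · frz_{F,g}(s_g) = frz_{F,g+m}(s_{g+m})`. When `supp s_{g+m}` misses `F`, freezing
`s_{g+m}` kills no monomial, so the right-hand side is `s_{g+m}` itself. -/

noncomputable section

namespace CAFreeze

variable {I : Type*} [Fintype I] [DecidableEq I]

/-- The Laurent polynomial ring LP = ℤ[x_i^{±1} : i ∈ I], modeled as the group algebra of
ℤ^I over ℤ. -/
abbrev LP (I : Type*) := AddMonoidAlgebra ℤ (I → ℤ)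

/-- The monomial x^m for an exponent vector m ∈ ℤ^I. -/
def mono (m : I → ℤ) : LP I := AddMonoidAlgebra.ofCoeff (Finsupp.single m 1)

/-- The coefficient of the monomial x^m in z ∈ LP. -/
def coeff (z : LP I) (m : I → ℤ) : ℤ := (z.coeff : (I → ℤ) →₀ ℤ) m

variable (Iuf : Finset I) (Bt : I → {i // i ∈ Iuf} → ℤ)

/-- The linear map p* : ℤ^{I_uf} → ℤ^I, p*(n) = B̃·n. -/
def pstar (n : {i // i ∈ Iuf} → ℤ) : I → ℤ := fun i => ∑ kk : {i // i ∈ Iuf}, Bt i kk * n kk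

/-- p*(n) for n ∈ ℕ^{I_uf}. -/
def pstarN (n : {i // i ∈ Iuf} → ℕ) : I → ℤ := pstar Iuf Bt fun kk => (n kk : ℤ)

/-- supp n = {k ∈ I_uf : n_k ≠ 0}, as a subset of I. -/
def suppn (n : {i // i ∈ Iuf} → ℕ) : Set I := {i | ∃ h : i ∈ Iuf, n ⟨i, h⟩ ≠ 0}

/-- LP_{⪯m}: the ℤ-submodule of LP spanned by the monomials x^{m+p*(n)}, n ∈ ℕ^{I_uf}. -/
def LPle (m : I → ℤ) : Submodule ℤ (LP I) :=
  Submodule.span ℤ {z : LP I | ∃ n : {i // i ∈ Iuf} → ℕ, z = mono (m + pstarN Iuf Bt n)}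

open Classical in
/-- The freezing operator frz_{F,m}: it keeps the monomials x^{m+p*(n)} with
supp n ∩ F = ∅ and kills the monomials x^{m+p*(n)} with supp n ∩ F ≠ ∅. -/
def frz (F : Finset I) (m : I → ℤ) (z : LP I) : LP I :=
  AddMonoidAlgebra.ofCoeff (Finsupp.filter
    (fun e => ∃ n : {i // i ∈ Iuf} → ℕ, e = m + pstarN Iuf Bt n ∧ suppn Iuf n ∩ (F : Set I) = ∅) z.coeff)

/-- z ∈ LP is pointed at g: z = Σ_{n ∈ ℕ^{I_uf}} c_n x^{g+p*(n)} with c_0 = 1. -/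
def Pointed (g : I → ℤ) (z : LP I) : Prop :=
  coeff z g = 1 ∧
    ∀ e ∈ (z.coeff : (I → ℤ) →₀ ℤ).support, ∃ n : {i // i ∈ Iuf} → ℕ, e = g + pstarN Iuf Bt n

/-- supp z = ∪_{c_n ≠ 0} supp n, for a g-pointed z = Σ_n c_n x^{g+p*(n)}. -/
def suppz (g : I → ℤ) (z : LP I) : Set I :=
  ⋃ n ∈ {n : {i // i ∈ Iuf} → ℕ | coeff z (g + pstarN Iuf Bt n) ≠ 0}, suppn Iuf n

/-- suppDim z ∈ ℕ^{I_uf}: the coordinatewise maximum of {n : c_n ≠ 0}, for a g-pointed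
z = Σ_n c_n x^{g+p*(n)}. -/
def suppDim (g : I → ℤ) (z : LP I) : {i // i ∈ Iuf} → ℕ :=
  fun kk => sSup {d : ℕ | ∃ n : {i // i ∈ Iuf} → ℕ, coeff z (g + pstarN Iuf Bt n) ≠ 0 ∧ n kk = d}

section

omit [Fintype I] [DecidableEq I]

lemma mono_zero : (mono 0 : LP I) = 1 :=
  AddMonoidAlgebra.one_def.symm

lemma mono_add (a b : I → ℤ) : (mono (a + b) : LP I) = mono a * mono b := by
  simp [mono, AddMonoidAlgebra.ofCoeff_single, AddMonoidAlgebra.single_mul_single]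

lemma frz_eq_self_of_suppz_inter_eq_empty {F : Finset I} {g : I → ℤ} {z : LP I}
    (hz : Pointed Iuf Bt g z) (hsupp : suppz Iuf Bt g z ∩ (F : Set I) = ∅) :
    frz Iuf Bt F g z = z := by
  classical
  ext e
  rw [frz, AddMonoidAlgebra.coeff_ofCoeff, Finsupp.filter_apply, ite_eq_left_iff]
  intro hfrozen
  by_contra hne
  obtain ⟨n, rfl⟩ := hz.2 e (Finsupp.mem_support_iff.mpr (Ne.symm hne))
  refine hfrozen ⟨n, rfl, Set.eq_empty_of_subset_empty fun i hi => ?_⟩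
  rw [← hsupp]
  exact ⟨Set.mem_biUnion (x := n) (Ne.symm hne) hi.1, hi.2⟩

end

lemma add_mem_of_mem_closure {M : Type*} [AddMonoid M] {Θ X : Set M}
    (hΘ : ∀ x ∈ X, ∀ g ∈ Θ, g + x ∈ Θ) {m : M} (hm : m ∈ AddSubmonoid.closure X) :
    ∀ g ∈ Θ, g + m ∈ Θ := by
  induction hm using AddSubmonoid.closure_induction with
  | mem x hx => exact hΘ x hx
  | zero => simp
  | add a b _ _ ha hb => exact fun g hg => add_assoc g a b ▸ hb _ (ha g hg)

section

omit [Fintype I]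

lemma indicator_mem_closure_single (F : Finset I) (d : I → ℕ) :
    (fun i => if i ∈ F then (d i : ℤ) else 0) ∈
      AddSubmonoid.closure ((fun j => Pi.single j (1 : ℤ)) '' (F : Set I)) := by
  have hsum : (fun i => if i ∈ F then (d i : ℤ) else 0) =
      ∑ j ∈ F, d j • Pi.single j (1 : ℤ) := by
    ext i
    simp [Finset.sum_apply, Pi.single_apply]
  rw [hsum]
  exact AddSubmonoid.sum_mem _ fun j hj =>
    AddSubmonoid.nsmul_mem _ (AddSubmonoid.subset_closure (Set.mem_image_of_mem _ hj)) _

lemma mono_mul_frz_of_mem_closure {F : Finset I} {Θ : Set (I → ℤ)}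
    (hΘ : ∀ j ∈ F, ∀ g ∈ Θ, g + Pi.single j (1 : ℤ) ∈ Θ) {s : (I → ℤ) → LP I}
    (hfact : ∀ j ∈ F, ∀ g ∈ Θ, mono (Pi.single j (1 : ℤ)) * frz Iuf Bt F g (s g) =
      frz Iuf Bt F (g + Pi.single j (1 : ℤ)) (s (g + Pi.single j (1 : ℤ))))
    {m : I → ℤ} (hm : m ∈ AddSubmonoid.closure ((fun j => Pi.single j (1 : ℤ)) '' (F : Set I))) :
    ∀ g ∈ Θ, mono m * frz Iuf Bt F g (s g) = frz Iuf Bt F (g + m) (s (g + m)) := by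
  induction hm using AddSubmonoid.closure_induction with
  | mem x hx =>
    obtain ⟨j, hj, rfl⟩ := hx
    exact hfact j hj
  | zero => simp [mono_zero]
  | add a b ha _ iha ihb =>
    intro g hg
    have hga : g + a ∈ Θ :=
      add_mem_of_mem_closure (by rintro _ ⟨j, hj, rfl⟩; exact hΘ j hj) ha g hg
    rw [mono_add, mul_comm (mono a), mul_assoc, iha g hg, ihb _ hga, add_assoc]

end

theorem localized_function_eq_frz
    (F : Finset I)
    (Θ : Set (I → ℤ)) (hΘ : ∀ i : I, ∀ g ∈ Θ, g + Pi.single i (1 : ℤ) ∈ Θ)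
    (s : (I → ℤ) → LP I) (hs : ∀ g ∈ Θ, Pointed Iuf Bt g (s g))
    -- the factorization property in the direction F
    (hfact : ∀ j ∈ F, ∀ g ∈ Θ, mono (Pi.single j (1 : ℤ)) * frz Iuf Bt F g (s g) =
      frz Iuf Bt F (g + Pi.single j (1 : ℤ)) (s (g + Pi.single j (1 : ℤ)))) :
    ∀ g ∈ Θ, ∀ d : I → ℕ,
      -- the shift vector Σ_{j∈F} d_j f_j ∈ ℤ^I
      ∀ m : I → ℤ, m = (fun i => if i ∈ F then (d i : ℤ) else 0) →
      suppz Iuf Bt (g + m) (s (g + m)) ∩ (F : Set I) = ∅ →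
      mono (-m) * s (g + m) = frz Iuf Bt F g (s g) := by
  rintro g hg d m rfl hsupp
  have hm := indicator_mem_closure_single F d
  have hgm : g + _ ∈ Θ := add_mem_of_mem_closure (by rintro _ ⟨j, -, rfl⟩; exact hΘ j) hm g hg
  rw [← frz_eq_self_of_suppz_inter_eq_empty Iuf Bt (hs _ hgm) hsupp,
    ← mono_mul_frz_of_mem_closure Iuf Bt (fun j _ => hΘ j) hfact hm g hg,
    ← mul_assoc, ← mono_add, neg_add_cancel, mono_zero, one_mul]

end CAFreeze
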